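/- (Termination theorem) Let R be a commutative ring, ≺ a monomial ordering on the standard monomial basis B of R⟨X₁,…,Xₙ⟩, and G an LM-reduced monic subset of R⟨X₁,…,Xₙ⟩. Then G is a monic Gröbner basis of the ideal I = ⟨G⟩ if and only if for every pair g, g' ∈ G (including g = g') and all u, v ∈ B such that LM(g)·u = v·LM(g') with the length of u strictly less than the length of LM(g') and the length of v strictly less than the length of LM(g), the overlap element o(g,u;v,g') = g·u − v·g' is reduced to 0 by division by G, i.e., o(g,u;v,g') is either 0 or can be written as a finite sum Σ λ_k w_k g_k s_k with λ_k ∈ R, w_k, s_k ∈ B, g_k ∈ G, and LM(w_k g_k s_k) ≺ LM(g)·u whenever λ_k ≠ 0. -/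

import Mathlib

noncomputable section
open MonoidAlgebra
open scoped Classical

/-- Words in the alphabet `X_1, ..., X_n`: the standard monomial basis `B`. -/
abbrev Word (n : ℕ) : Type := FreeMonoid (Fin n)

/-- The free `R`-algebra `R⟨X_1, ..., X_n⟩`, realized as the monoid algebra of the
free monoid on `n` letters over `R`. -/
abbrev FreeAlg (R : Type) [CommRing R] (n : ℕ) : Type := MonoidAlgebra R (Word n)

variable {R : Type} [CommRing R] {n : ℕ}

/-- The monomial (word) `w` viewed as an element of the free algebra. -/
def mono (R : Type) [CommRing R] {n : ℕ} (w : Word n) : FreeAlg R n :=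
  MonoidAlgebra.of R (Word n) w

/-- A monomial ordering: a well-ordering on words compatible with two-sided multiplication. -/
def IsMonomialOrder (n : ℕ) [LinearOrder (Word n)] : Prop :=
  WellFoundedLT (Word n) ∧ ∀ w u v s : Word n, u < v → w * u * s < w * v * s

/-- The leading monomial of `f` (with junk value `1` for `f = 0`). -/
def LMon [LinearOrder (Word n)] (f : FreeAlg R n) : Word n :=
  if h : f = 0 then 1 else f.coeff.support.max'
    (Finsupp.support_nonempty_iff.mpr (fun h' => h (by
      rw [← MonoidAlgebra.ofCoeff_coeff f, h', MonoidAlgebra.ofCoeff_zero])))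

/-- The leading coefficient of `f`. -/
def LCoef [LinearOrder (Word n)] (f : FreeAlg R n) : R := f.coeff (LMon f)

/-- `f` is monic: it is nonzero and its leading coefficient is `1`. -/
def IsMonic [LinearOrder (Word n)] (f : FreeAlg R n) : Prop := f ≠ 0 ∧ LCoef f = 1

/-- `v` divides `u` as words: `u = w * v * s` for some words `w, s`. -/
def MDvd {n : ℕ} (v u : Word n) : Prop := ∃ w s : Word n, u = w * v * s

/-- `G` is a monic Gröbner basis of the two-sided ideal `I`: every element of `G` is monic,
and the leading monomial of every nonzero element of `I` is divisible by the leading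
monomial of some element of `G`. -/
def IsMonicGB [LinearOrder (Word n)] (G : Set (FreeAlg R n))
    (I : TwoSidedIdeal (FreeAlg R n)) : Prop :=
  (∀ g ∈ G, IsMonic g) ∧ ∀ f ∈ I, f ≠ 0 → ∃ g ∈ G, MDvd (LMon g) (LMon f)

/-- `G` is LM-reduced: for distinct `g, g' ∈ G`, `LM(g)` does not divide `LM(g')`. -/
def LMReduced [LinearOrder (Word n)] (G : Set (FreeAlg R n)) : Prop :=
  ∀ g ∈ G, ∀ g' ∈ G, g ≠ g' → ¬ MDvd (LMon g) (LMon g')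

/-!
Let `V(<t)` and `V(≤t)` be the `R`-spans of the products `w g s` (`g ∈ G`, `w, s` words) whose
leading word `w LM(g) s` is `< t`, resp. `≤ t` (`sandwichSpan G (Set.Iio t)` and
`sandwichSpan G (Set.Iic t)`); an overlap element reduces to `0` exactly when it lies in
`V(< LM(g) u)`.

If `G` is a Gröbner basis, division by `G` puts every `f ∈ ⟨G⟩` into `V(≤ LM f)`. The leading
words of `g u` and `v g'` cancel, so the overlap element lies in `V(< LM(g) u)`.

Conversely, two products `w₁ g₁ s₁`, `w₂ g₂ s₂` with the same leading word `t` differ by an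
element of `V(<t)`. The occurrences of `LM(g₁)` and `LM(g₂)` in `t` are either disjoint (then
expand the lower terms of both), or overlapping (then the difference is a shifted overlap
element), or nested (impossible for an LM-reduced `G` unless they coincide). Hence
`V(≤t) = R b + V(<t)` for any product `b` with leading word `t`, so an element of `V(≤t)` whose
coefficient at `t` vanishes lies in `V(<t)`. For `0 ≠ f ∈ ⟨G⟩`, take `t` minimal with
`f ∈ V(≤t)`: the coefficient of `t` in `f` is then nonzero, so `LM f = t = w LM(g) s`.
-/

namespace FreeMonoid

variable {α : Type*}

lemma mul_eq_mul_cases {a b x y : FreeMonoid α} (h : a * x = b * y) :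
    (∃ r, b = a * r ∧ x = r * y) ∨ ∃ r, r ≠ 1 ∧ a = b * r ∧ y = r * x := by
  have h' : a.toList ++ x.toList = b.toList ++ y.toList := by
    simpa only [toList_mul] using congrArg toList h
  rcases List.append_eq_append_iff.mp h' with ⟨r, hb, hx⟩ | ⟨r, ha, hy⟩
  · exact .inl ⟨ofList r, toList.injective hb, toList.injective hx⟩
  · rcases eq_or_ne r [] with rfl | hr
    · refine .inl ⟨1, ?_, ?_⟩ <;> apply toList.injective <;> simp_all
    · exact .inr ⟨ofList r, fun h1 => hr (congrArg toList h1), toList.injective ha,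
        toList.injective hy⟩

lemma length_lt_length_mul_right {a : FreeMonoid α} (b : FreeMonoid α) (ha : a ≠ 1) :
    b.length < (b * a).length := by
  rw [length_mul, Nat.lt_add_right_iff_pos, Nat.pos_iff_ne_zero, Ne, length_eq_zero]
  exact ha

lemma length_lt_length_mul_left {a : FreeMonoid α} (b : FreeMonoid α) (ha : a ≠ 1) :
    b.length < (a * b).length := by
  rw [length_mul, add_comm, ← length_mul]
  exact length_lt_length_mul_right b ha

end FreeMonoid

lemma mono_eq_single (w : Word n) : mono R w = single w 1 := rfl

lemma mono_one : mono R (1 : Word n) = 1 := map_one _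

lemma mono_mul (u v : Word n) : mono R (u * v) = mono R u * mono R v := map_mul _ _ _

lemma coeff_mono_mul_mul_mono (w s m : Word n) (f : FreeAlg R n) :
    (mono R w * f * mono R s).coeff (w * m * s) = f.coeff m := by
  simp [mono_eq_single]

lemma support_mono_mul (w : Word n) (f : FreeAlg R n) :
    (mono R w * f).coeff.support = f.coeff.support.map (mulLeftEmbedding w) :=
  support_coeff_single_mul f 1 (by simp) w

lemma support_mul_mono (s : Word n) (f : FreeAlg R n) :
    (f * mono R s).coeff.support = f.coeff.support.map (mulRightEmbedding s) :=
  support_coeff_mul_single f 1 (by simp) s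

lemma exists_eq_of_mem_support_mono_mul_mul_mono {w s m : Word n} {f : FreeAlg R n}
    (hm : m ∈ (mono R w * f * mono R s).coeff.support) :
    ∃ y ∈ f.coeff.support, m = w * y * s := by
  simp only [support_mul_mono, support_mono_mul, Finset.map_map, Finset.mem_map] at hm
  obtain ⟨y, hy, rfl⟩ := hm
  exact ⟨y, hy, rfl⟩

section LeadingMonomial

variable [LinearOrder (Word n)]

lemma le_lMon {f : FreeAlg R n} {m : Word n} (hm : f.coeff m ≠ 0) : m ≤ LMon f := by
  have hf : f ≠ 0 := by rintro rfl; exact hm rfl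
  rw [LMon, dif_neg hf]
  exact Finset.le_max' _ _ (Finsupp.mem_support_iff.mpr hm)

lemma coeff_lMon_ne_zero {f : FreeAlg R n} (hf : f ≠ 0) : f.coeff (LMon f) ≠ 0 := by
  rw [← Finsupp.mem_support_iff, LMon, dif_neg hf]
  exact Finset.max'_mem _ _

lemma coeff_eq_zero_of_lMon_lt {f : FreeAlg R n} {m : Word n} (h : LMon f < m) :
    f.coeff m = 0 := by
  by_contra hm
  exact (le_lMon hm).not_gt h

lemma lMon_eq_of_coeff {f : FreeAlg R n} {t : Word n} (ht : f.coeff t ≠ 0)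
    (habove : ∀ m, t < m → f.coeff m = 0) : LMon f = t := by
  have hf : f ≠ 0 := by rintro rfl; exact ht rfl
  refine le_antisymm (not_lt.mp fun hlt => ?_) (le_lMon ht)
  exact coeff_lMon_ne_zero hf (habove _ hlt)

lemma lMon_lt_of_coeff_eq_zero {f : FreeAlg R n} (hf : f ≠ 0) {t : Word n}
    (habove : ∀ m, t < m → f.coeff m = 0) (ht : f.coeff t = 0) : LMon f < t := by
  refine lt_of_le_of_ne (not_lt.mp fun hlt => ?_) fun h => coeff_lMon_ne_zero hf (h ▸ ht)
  exact coeff_lMon_ne_zero hf (habove _ hlt)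

lemma lMon_sub_lCoef_smul_lt {f b : FreeAlg R n} (hb : IsMonic b) (hLM : LMon b = LMon f)
    (hne : f - LCoef f • b ≠ 0) : LMon (f - LCoef f • b) < LMon f := by
  refine lMon_lt_of_coeff_eq_zero hne (fun m hm => ?_) ?_
  · simp [coeff_sub, coeff_eq_zero_of_lMon_lt hm, coeff_eq_zero_of_lMon_lt (hLM ▸ hm)]
  · have hb1 : b.coeff (LMon f) = 1 := hLM ▸ hb.2
    simp [coeff_sub, hb1, LCoef]

variable (hord : IsMonomialOrder n)
include hord

lemma IsMonomialOrder.mul_lt_mul (w s : Word n) {u v : Word n} (h : u < v) :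
    w * u * s < w * v * s :=
  hord.2 w u v s h

lemma IsMonomialOrder.mul_le_mul (w s : Word n) {u v : Word n} (h : u ≤ v) :
    w * u * s ≤ w * v * s := by
  rcases h.lt_or_eq with h | rfl
  · exact (hord.mul_lt_mul w s h).le
  · rfl

lemma le_of_mem_support_mono_mul_mul_mono {w s m : Word n} {f : FreeAlg R n}
    (hm : m ∈ (mono R w * f * mono R s).coeff.support) : m ≤ w * LMon f * s := by
  obtain ⟨y, hy, rfl⟩ := exists_eq_of_mem_support_mono_mul_mul_mono hm
  exact hord.mul_le_mul w s (le_lMon (Finsupp.mem_support_iff.mp hy))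

lemma lMon_mono_mul_mul_mono (w s : Word n) {f : FreeAlg R n} (hf : f ≠ 0) :
    LMon (mono R w * f * mono R s) = w * LMon f * s := by
  refine lMon_eq_of_coeff ?_ fun m hm => ?_
  · rw [coeff_mono_mul_mul_mono]
    exact coeff_lMon_ne_zero hf
  · by_contra h
    exact (le_of_mem_support_mono_mul_mul_mono hord (Finsupp.mem_support_iff.mpr h)).not_gt hm

lemma IsMonic.mono_mul_mul_mono {g : FreeAlg R n} (hg : IsMonic g) (w s : Word n) :
    IsMonic (mono R w * g * mono R s) := by
  have hlead : (mono R w * g * mono R s).coeff (w * LMon g * s) = 1 := by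
    rw [coeff_mono_mul_mul_mono]
    exact hg.2
  refine ⟨fun h => coeff_lMon_ne_zero hg.1 ?_, ?_⟩
  · rw [← coeff_mono_mul_mul_mono w s, h, coeff_zero, Finsupp.coe_zero, Pi.zero_apply]
  · rw [LCoef, lMon_mono_mul_mul_mono hord _ _ hg.1, hlead]

end LeadingMonomial

section SandwichSpan

variable [LinearOrder (Word n)]

def sandwichSpan (G : Set (FreeAlg R n)) (S : Set (Word n)) : Submodule R (FreeAlg R n) :=
  Submodule.span R
    {f | ∃ g ∈ G, ∃ w s : Word n, w * LMon g * s ∈ S ∧ f = mono R w * g * mono R s}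

variable {G : Set (FreeAlg R n)}

lemma mono_mul_mul_mono_mem_sandwichSpan {g : FreeAlg R n} (hg : g ∈ G) {S : Set (Word n)}
    {w s : Word n} (h : w * LMon g * s ∈ S) : mono R w * g * mono R s ∈ sandwichSpan G S :=
  Submodule.subset_span ⟨g, hg, w, s, h, rfl⟩

lemma sandwichSpan_mono {S T : Set (Word n)} (h : S ⊆ T) : sandwichSpan G S ≤ sandwichSpan G T :=
  Submodule.span_mono fun _ ⟨g, hg, w, s, hS, hf⟩ => ⟨g, hg, w, s, h hS, hf⟩

lemma mul_mul_mem_sandwichSpan {g : FreeAlg R n} (hg : g ∈ G) {S : Set (Word n)}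
    {a b : FreeAlg R n} (h : ∀ u ∈ a.coeff.support, ∀ v ∈ b.coeff.support, u * LMon g * v ∈ S) :
    a * g * b ∈ sandwichSpan G S := by
  refine Submodule.span_induction₂ (p := fun x y _ _ => x * g * y ∈ sandwichSpan G S)
    ?_ (by simp) (by simp) ?_ ?_ ?_ ?_ (mem_span_support_coeff a) (mem_span_support_coeff b)
  · rintro _ _ ⟨u, hu, rfl⟩ ⟨v, hv, rfl⟩
    exact mono_mul_mul_mono_mem_sandwichSpan hg (h u hu v hv)
  · intro x y z _ _ _ hx hy
    simpa only [add_mul] using add_mem hx hy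
  · intro x y z _ _ _ hy hz
    simpa only [mul_add] using add_mem hy hz
  · intro c x y _ _ hx
    simpa only [smul_mul_assoc] using Submodule.smul_mem _ c hx
  · intro c x y _ _ hy
    simpa only [mul_smul_comm] using Submodule.smul_mem _ c hy

lemma mem_sandwichSpan_univ_of_mem_span {f : FreeAlg R n} (hf : f ∈ TwoSidedIdeal.span G) :
    f ∈ sandwichSpan G Set.univ := by
  rw [TwoSidedIdeal.mem_span_iff_mem_addSubgroup_closure] at hf
  refine (AddSubgroup.closure_le (K := (sandwichSpan G Set.univ).toAddSubgroup)).mpr ?_ hf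
  rintro _ ⟨_, ⟨a, -, g, hg, rfl⟩, b, -, rfl⟩
  exact mul_mul_mem_sandwichSpan hg fun _ _ _ _ => Set.mem_univ _

lemma mem_span_of_mem_sandwichSpan {S : Set (Word n)} {f : FreeAlg R n}
    (hf : f ∈ sandwichSpan G S) : f ∈ TwoSidedIdeal.span G := by
  induction hf using Submodule.span_induction with
  | mem x hx =>
    obtain ⟨g, hg, w, s, -, rfl⟩ := hx
    exact TwoSidedIdeal.mul_mem_right _ _ _
      (TwoSidedIdeal.mul_mem_left _ _ _ (TwoSidedIdeal.subset_span hg))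
  | zero => exact zero_mem _
  | add x y _ _ hx hy => exact add_mem hx hy
  | smul c x _ hx =>
    rw [Algebra.smul_def]
    exact TwoSidedIdeal.mul_mem_left _ _ _ hx

lemma eq_zero_or_exists_mem_sandwichSpan_Iic {S : Set (Word n)} {f : FreeAlg R n}
    (hf : f ∈ sandwichSpan G S) : f = 0 ∨ ∃ t ∈ S, f ∈ sandwichSpan G (Set.Iic t) := by
  induction hf using Submodule.span_induction with
  | mem x hx =>
    obtain ⟨g, hg, w, s, hS, rfl⟩ := hx
    exact .inr ⟨_, hS, mono_mul_mul_mono_mem_sandwichSpan hg le_rfl⟩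
  | zero => exact .inl rfl
  | add x y _ _ hx hy =>
    rcases hx with rfl | ⟨t₁, ht₁, hx⟩
    · simpa using hy
    rcases hy with rfl | ⟨t₂, ht₂, hy⟩
    · simpa using Or.inr ⟨t₁, ht₁, hx⟩
    have hmax : max t₁ t₂ ∈ S := by rcases max_choice t₁ t₂ with h | h <;> rw [h] <;> assumption
    refine .inr ⟨max t₁ t₂, hmax, add_mem ?_ ?_⟩
    · exact sandwichSpan_mono (Set.Iic_subset_Iic.mpr (le_max_left _ _)) hx
    · exact sandwichSpan_mono (Set.Iic_subset_Iic.mpr (le_max_right _ _)) hy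
  | smul c x _ hx =>
    rcases hx with rfl | ⟨t, ht, hx⟩
    · simp
    · exact .inr ⟨t, ht, Submodule.smul_mem _ c hx⟩

variable (hord : IsMonomialOrder n)
include hord

lemma coeff_eq_zero_of_mem_sandwichSpan {S : Set (Word n)} {f : FreeAlg R n}
    (hf : f ∈ sandwichSpan G S) {m : Word n} (hm : ∀ t ∈ S, t < m) : f.coeff m = 0 := by
  induction hf using Submodule.span_induction with
  | mem x hx =>
    obtain ⟨g, hg, w, s, hS, rfl⟩ := hx
    by_contra h
    exact (le_of_mem_support_mono_mul_mul_mono hord (Finsupp.mem_support_iff.mpr h)).not_gt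
      (hm _ hS)
  | zero => rfl
  | add x y _ _ hx hy => simp [coeff_add, hx, hy]
  | smul c x _ hx => simp [hx]

lemma mono_mul_mul_mono_mem_sandwichSpan_Iio {t : Word n} {f : FreeAlg R n}
    (hf : f ∈ sandwichSpan G (Set.Iio t)) (w s : Word n) :
    mono R w * f * mono R s ∈ sandwichSpan G (Set.Iio (w * t * s)) := by
  induction hf using Submodule.span_induction with
  | mem x hx =>
    obtain ⟨g, hg, w', s', hlt, rfl⟩ := hx
    have key : mono R w * (mono R w' * g * mono R s') * mono R s =
        mono R (w * w') * g * mono R (s' * s) := by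
      simp only [mono_mul, mul_assoc]
    rw [key]
    refine mono_mul_mul_mono_mem_sandwichSpan hg ?_
    simpa only [Set.mem_Iio, mul_assoc] using hord.mul_lt_mul w s hlt
  | zero => simp
  | add x y _ _ hx hy => simpa only [mul_add, add_mul] using add_mem hx hy
  | smul c x _ hx => simpa only [mul_smul_comm, smul_mul_assoc] using Submodule.smul_mem _ c hx

end SandwichSpan

section GroebnerBasis

variable [LinearOrder (Word n)] {G : Set (FreeAlg R n)} (hord : IsMonomialOrder n)
include hord

lemma mem_sandwichSpan_Iio_iff (hmonic : ∀ g ∈ G, IsMonic g) {T : Word n} {f : FreeAlg R n} :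
    f ∈ sandwichSpan G (Set.Iio T) ↔
      f = 0 ∨ ∃ (k : ℕ) (c : Fin k → R) (w s : Fin k → Word n) (h : Fin k → FreeAlg R n),
        (∀ i, h i ∈ G) ∧ f = ∑ i, c i • (mono R (w i) * h i * mono R (s i)) ∧
          ∀ i, c i ≠ 0 → LMon (mono R (w i) * h i * mono R (s i)) < T := by
  constructor
  · intro hf
    obtain ⟨k, c, x, rfl⟩ := Submodule.mem_span_set'.mp hf
    choose h hG w s hlt hx using fun i => (x i).2
    refine .inr ⟨k, c, w, s, h, hG, by simp only [← hx], fun i _ => ?_⟩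
    rw [lMon_mono_mul_mul_mono hord _ _ (hmonic _ (hG i)).1]
    exact hlt i
  · rintro (rfl | ⟨k, c, w, s, h, hG, rfl, hlt⟩)
    · exact zero_mem _
    refine Submodule.sum_mem _ fun i _ => ?_
    rcases eq_or_ne (c i) 0 with hc | hc
    · simp [hc]
    refine Submodule.smul_mem _ _ (mono_mul_mul_mono_mem_sandwichSpan (hG i) ?_)
    rw [← lMon_mono_mul_mul_mono hord _ _ (hmonic _ (hG i)).1]
    exact hlt i hc

variable (hGB : IsMonicGB G (TwoSidedIdeal.span G))
include hGB

lemma mem_sandwichSpan_Iic_lMon {f : FreeAlg R n} (hf : f ∈ TwoSidedIdeal.span G) :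
    f ∈ sandwichSpan G (Set.Iic (LMon f)) := by
  induction hLM : LMon f using hord.1.wf.induction generalizing f with
  | _ t IH =>
  rcases eq_or_ne f 0 with rfl | hf0
  · exact zero_mem _
  obtain ⟨g, hg, w, s, hwgs⟩ := hGB.2 f hf hf0
  set b := mono R w * g * mono R s
  have hb : LMon b = LMon f := by rw [lMon_mono_mul_mul_mono hord _ _ (hGB.1 g hg).1, hwgs]
  have hbt : b ∈ sandwichSpan G (Set.Iic t) :=
    mono_mul_mul_mono_mem_sandwichSpan hg (hwgs ▸ hLM ▸ le_rfl)
  suffices f - LCoef f • b ∈ sandwichSpan G (Set.Iic t) by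
    simpa using add_mem this (Submodule.smul_mem _ (LCoef f) hbt)
  rcases eq_or_ne (f - LCoef f • b) 0 with h0 | h0
  · rw [h0]; exact zero_mem _
  have hlt := hLM ▸ lMon_sub_lCoef_smul_lt ((hGB.1 g hg).mono_mul_mul_mono hord w s) hb h0
  have hf' := sub_mem hf (mem_span_of_mem_sandwichSpan (Submodule.smul_mem _ (LCoef f) hbt))
  exact sandwichSpan_mono (Set.Iic_subset_Iic.mpr hlt.le) (IH _ hlt hf' rfl)

lemma overlap_mem_sandwichSpan_Iio_of_isMonicGB {g g' : FreeAlg R n} (hg : g ∈ G) (hg' : g' ∈ G)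
    {u v : Word n} (huv : LMon g * u = v * LMon g') :
    g * mono R u - mono R v * g' ∈ sandwichSpan G (Set.Iio (LMon g * u)) := by
  set b₁ := mono R 1 * g * mono R u
  set b₂ := mono R v * g' * mono R 1
  have hb₁ : IsMonic b₁ := (hGB.1 g hg).mono_mul_mul_mono hord 1 u
  have hLM₁ : LMon b₁ = LMon g * u := by
    rw [lMon_mono_mul_mul_mono hord _ _ (hGB.1 g hg).1, one_mul]
  have hLM₂ : LMon b₂ = LMon b₁ := by
    rw [lMon_mono_mul_mul_mono hord _ _ (hGB.1 g' hg').1, hLM₁, huv, mul_one]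
  have hf : g * mono R u - mono R v * g' = b₁ - LCoef b₁ • b₂ := by
    rw [hb₁.2, one_smul]
    simp only [b₁, b₂, mono_one, one_mul, mul_one]
  rw [hf]
  rcases eq_or_ne (b₁ - LCoef b₁ • b₂) 0 with h0 | h0
  · rw [h0]; exact zero_mem _
  have hspan : b₁ - LCoef b₁ • b₂ ∈ TwoSidedIdeal.span G := by
    refine sub_mem (mem_span_of_mem_sandwichSpan (S := Set.univ) ?_)
      (mem_span_of_mem_sandwichSpan (S := Set.univ) (Submodule.smul_mem _ _ ?_)) <;>
    exact mono_mul_mul_mono_mem_sandwichSpan ‹_› (Set.mem_univ _)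
  have hlt := lMon_sub_lCoef_smul_lt ((hGB.1 g' hg').mono_mul_mul_mono hord v 1) hLM₂ h0
  exact sandwichSpan_mono (Set.Iic_subset_Iio.mpr (hLM₁ ▸ hlt))
    (mem_sandwichSpan_Iic_lMon hord hGB hspan)

end GroebnerBasis

section Overlaps

variable [LinearOrder (Word n)]

lemma lt_lMon_of_mem_support_mono_lMon_sub {g : FreeAlg R n} (hg : IsMonic g) {y : Word n}
    (hy : y ∈ (mono R (LMon g) - g).coeff.support) : y < LMon g := by
  rw [Finsupp.mem_support_iff, coeff_sub, Finsupp.sub_apply, mono_eq_single, coeff_single] at hy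
  rcases eq_or_ne y (LMon g) with rfl | hne
  · exact absurd (by rw [Finsupp.single_eq_same]; exact sub_eq_zero.mpr hg.2.symm) hy
  · rw [Finsupp.single_apply, if_neg hne.symm, zero_sub, neg_ne_zero] at hy
    exact (le_lMon hy).lt_of_ne hne

def OverlapsReduce (G : Set (FreeAlg R n)) : Prop :=
  ∀ g ∈ G, ∀ g' ∈ G, ∀ u v : Word n, LMon g * u = v * LMon g' →
    u.length < (LMon g').length → v.length < (LMon g).length →
    g * mono R u - mono R v * g' ∈ sandwichSpan G (Set.Iio (LMon g * u))

variable {G : Set (FreeAlg R n)} (hord : IsMonomialOrder n) (hmonic : ∀ g ∈ G, IsMonic g)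
include hord hmonic

lemma mul_mono_sub_mono_mul_mem_sandwichSpan_Iio {g₁ g₂ : FreeAlg R n} (hg₁ : g₁ ∈ G)
    (hg₂ : g₂ ∈ G) (m : Word n) :
    g₁ * mono R (m * LMon g₂) - mono R (LMon g₁ * m) * g₂ ∈
      sandwichSpan G (Set.Iio (LMon g₁ * m * LMon g₂)) := by
  have key : g₁ * mono R (m * LMon g₂) - mono R (LMon g₁ * m) * g₂ =
      1 * g₁ * (mono R m * (mono R (LMon g₂) - g₂)) -
        (mono R (LMon g₁) - g₁) * mono R m * g₂ * 1 := by
    simp only [mono_mul]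
    noncomm_ring
  rw [key]
  refine sub_mem (mul_mul_mem_sandwichSpan hg₁ fun u hu v hv => ?_)
    (mul_mul_mem_sandwichSpan hg₂ fun u hu v hv => ?_)
  · obtain rfl : u = 1 := by simpa using support_coeff_one_subset hu
    rw [support_mono_mul, Finset.mem_map] at hv
    obtain ⟨y, hy, rfl⟩ := hv
    simpa only [Set.mem_Iio, mulLeftEmbedding_apply, one_mul, mul_one, mul_assoc] using
      hord.mul_lt_mul (LMon g₁ * m) 1 (lt_lMon_of_mem_support_mono_lMon_sub (hmonic g₂ hg₂) hy)
  · obtain rfl : v = 1 := by simpa using support_coeff_one_subset hv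
    rw [support_mul_mono, Finset.mem_map] at hu
    obtain ⟨x, hx, rfl⟩ := hu
    simpa only [Set.mem_Iio, mulRightEmbedding_apply, one_mul, mul_one, mul_assoc] using
      hord.mul_lt_mul 1 (m * LMon g₂) (lt_lMon_of_mem_support_mono_lMon_sub (hmonic g₁ hg₁) hx)

variable (hred : LMReduced G) (hov : OverlapsReduce G)
include hred hov

lemma mul_mono_sub_mono_mul_mul_mono_mem_sandwichSpan_Iio {g₁ g₂ : FreeAlg R n} (hg₁ : g₁ ∈ G)
    (hg₂ : g₂ ∈ G) {r s₁ s₂ : Word n} (h : LMon g₁ * s₁ = r * (LMon g₂ * s₂)) :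
    g₁ * mono R s₁ - mono R r * g₂ * mono R s₂ ∈ sandwichSpan G (Set.Iio (LMon g₁ * s₁)) := by
  rcases FreeMonoid.mul_eq_mul_cases h with ⟨m, rfl, rfl⟩ | ⟨p, hp, hX₁, hps⟩
  · -- the two leading words do not overlap
    have := mono_mul_mul_mono_mem_sandwichSpan_Iio hord
      (mul_mono_sub_mono_mul_mem_sandwichSpan_Iio hord hmonic hg₁ hg₂ m) 1 s₂
    convert this using 2 <;> simp only [mono_one, mono_mul, one_mul, sub_mul, mul_assoc]
  rcases FreeMonoid.mul_eq_mul_cases hps.symm with ⟨u, hX₂, rfl⟩ | ⟨e, he, hpe, -⟩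
  · -- `LM(g₁) = r p` and `LM(g₂) = p u` overlap in `p ≠ 1`
    have hoverlap := hov g₁ hg₁ g₂ hg₂ u r (by rw [hX₁, hX₂, mul_assoc])
      (hX₂ ▸ FreeMonoid.length_lt_length_mul_left u hp)
      (hX₁ ▸ FreeMonoid.length_lt_length_mul_right r hp)
    have := mono_mul_mul_mono_mem_sandwichSpan_Iio hord hoverlap 1 s₂
    convert this using 2 <;> simp only [mono_one, mono_mul, one_mul, sub_mul, mul_assoc]
  · -- `LM(g₂)` sits strictly inside `LM(g₁)`
    have hdvd : MDvd (LMon g₂) (LMon g₁) := ⟨r, e, by rw [hX₁, hpe, mul_assoc]⟩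
    obtain rfl : g₂ = g₁ := by_contra fun hne => hred g₂ hg₂ g₁ hg₁ hne hdvd
    have hlen := congrArg FreeMonoid.length hX₁
    simp only [hpe, FreeMonoid.length_mul] at hlen
    exact absurd (FreeMonoid.length_eq_zero.mp (by omega)) he

lemma mono_mul_mul_mono_sub_mem_sandwichSpan_Iio {g₁ g₂ : FreeAlg R n} (hg₁ : g₁ ∈ G)
    (hg₂ : g₂ ∈ G) {w₁ s₁ w₂ s₂ : Word n} (h : w₁ * LMon g₁ * s₁ = w₂ * LMon g₂ * s₂) :
    mono R w₁ * g₁ * mono R s₁ - mono R w₂ * g₂ * mono R s₂ ∈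
      sandwichSpan G (Set.Iio (w₁ * LMon g₁ * s₁)) := by
  simp only [mul_assoc] at h
  rcases FreeMonoid.mul_eq_mul_cases h with ⟨r, rfl, hr⟩ | ⟨r, -, rfl, hr⟩
  · have := mono_mul_mul_mono_mem_sandwichSpan_Iio hord
      (mul_mono_sub_mono_mul_mul_mono_mem_sandwichSpan_Iio hord hmonic hred hov hg₁ hg₂ hr) w₁ 1
    convert this using 2 <;> simp only [mono_one, mono_mul, mul_one, mul_sub, mul_assoc]
  · have := neg_mem <| mono_mul_mul_mono_mem_sandwichSpan_Iio hord
      (mul_mono_sub_mono_mul_mul_mono_mem_sandwichSpan_Iio hord hmonic hred hov hg₂ hg₁ hr) w₂ 1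
    have hf : mono R (w₂ * r) * g₁ * mono R s₁ - mono R w₂ * g₂ * mono R s₂ =
        -(mono R w₂ * (g₂ * mono R s₂ - mono R r * g₁ * mono R s₁) * mono R 1) := by
      simp only [mono_one, mono_mul]
      noncomm_ring
    have ht : w₂ * r * LMon g₁ * s₁ = w₂ * (LMon g₂ * s₂) * 1 := by
      simpa only [mul_one, mul_assoc] using h
    rwa [hf, ht]

end Overlaps

section Termination

variable [LinearOrder (Word n)] {G : Set (FreeAlg R n)}

lemma sandwichSpan_Iic_le_Iio {t : Word n} (h : ∀ g ∈ G, ¬ MDvd (LMon g) t) :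
    sandwichSpan G (Set.Iic t) ≤ sandwichSpan G (Set.Iio t) :=
  Submodule.span_mono fun _ ⟨g, hg, w, s, hle, hf⟩ =>
    ⟨g, hg, w, s, hle.lt_of_ne fun heq => h g hg ⟨w, s, heq.symm⟩, hf⟩

lemma exists_mdvd_of_coeff_ne_zero (hord : IsMonomialOrder n) {t : Word n} {f : FreeAlg R n}
    (hf : f ∈ sandwichSpan G (Set.Iic t)) (ht : f.coeff t ≠ 0) : ∃ g ∈ G, MDvd (LMon g) t := by
  by_contra! h
  exact ht (coeff_eq_zero_of_mem_sandwichSpan hord (sandwichSpan_Iic_le_Iio h hf) fun _ => id)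

variable (hord : IsMonomialOrder n) (hmonic : ∀ g ∈ G, IsMonic g) (hred : LMReduced G)
  (hov : OverlapsReduce G)
include hord hmonic hred hov

lemma exists_sub_smul_mem_sandwichSpan_Iio {g₀ : FreeAlg R n} (hg₀ : g₀ ∈ G) {w₀ s₀ : Word n}
    {f : FreeAlg R n} (hf : f ∈ sandwichSpan G (Set.Iic (w₀ * LMon g₀ * s₀))) :
    ∃ c : R, f - c • (mono R w₀ * g₀ * mono R s₀) ∈
      sandwichSpan G (Set.Iio (w₀ * LMon g₀ * s₀)) := by
  induction hf using Submodule.span_induction with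
  | mem x hx =>
    obtain ⟨g, hg, w, s, hle, rfl⟩ := hx
    rcases hle.lt_or_eq with hlt | heq
    · refine ⟨0, ?_⟩
      rw [zero_smul, sub_zero]
      exact mono_mul_mul_mono_mem_sandwichSpan hg hlt
    · refine ⟨1, ?_⟩
      rw [one_smul, ← heq]
      exact mono_mul_mul_mono_sub_mem_sandwichSpan_Iio hord hmonic hred hov hg hg₀ heq
  | zero =>
    refine ⟨0, ?_⟩
    rw [zero_smul, sub_zero]
    exact zero_mem _
  | add x y _ _ hx hy =>
    obtain ⟨c₁, h₁⟩ := hx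
    obtain ⟨c₂, h₂⟩ := hy
    exact ⟨c₁ + c₂, by simpa only [add_smul, sub_add_sub_comm] using add_mem h₁ h₂⟩
  | smul a x _ hx =>
    obtain ⟨c, h⟩ := hx
    exact ⟨a * c, by simpa only [mul_smul, smul_sub] using Submodule.smul_mem _ a h⟩

lemma mem_sandwichSpan_Iio_of_coeff_eq_zero {t : Word n} {f : FreeAlg R n}
    (hf : f ∈ sandwichSpan G (Set.Iic t)) (ht : f.coeff t = 0) :
    f ∈ sandwichSpan G (Set.Iio t) := by
  by_cases h : ∃ g ∈ G, MDvd (LMon g) t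
  · obtain ⟨g₀, hg₀, w₀, s₀, rfl⟩ := h
    obtain ⟨c, hc⟩ := exists_sub_smul_mem_sandwichSpan_Iio hord hmonic hred hov hg₀ hf
    have hb : (mono R w₀ * g₀ * mono R s₀).coeff (w₀ * LMon g₀ * s₀) = 1 :=
      (coeff_mono_mul_mul_mono _ _ _ _).trans (hmonic g₀ hg₀).2
    have hc0 := coeff_eq_zero_of_mem_sandwichSpan hord hc (m := w₀ * LMon g₀ * s₀) fun _ => id
    rw [coeff_sub, coeff_smul, Finsupp.sub_apply, Finsupp.smul_apply, ht, hb, smul_eq_mul,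
      mul_one, zero_sub, neg_eq_zero] at hc0
    rwa [hc0, zero_smul, sub_zero] at hc
  · push Not at h
    exact sandwichSpan_Iic_le_Iio h hf

lemma exists_mdvd_lMon_of_mem_span {f : FreeAlg R n} (hf : f ∈ TwoSidedIdeal.span G)
    (hf0 : f ≠ 0) : ∃ g ∈ G, MDvd (LMon g) (LMon f) := by
  obtain ⟨t, ht, hmin⟩ := hord.1.wf.has_min {t | f ∈ sandwichSpan G (Set.Iic t)} <|
    ((eq_zero_or_exists_mem_sandwichSpan_Iic (mem_sandwichSpan_univ_of_mem_span hf)).resolve_left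
      hf0).imp fun _ => And.right
  have hcoeff : f.coeff t ≠ 0 := by
    intro h0
    rcases eq_zero_or_exists_mem_sandwichSpan_Iic
      (mem_sandwichSpan_Iio_of_coeff_eq_zero hord hmonic hred hov ht h0) with rfl | ⟨t', ht', hf'⟩
    · exact hf0 rfl
    · exact hmin t' hf' ht'
  rw [lMon_eq_of_coeff hcoeff fun m hm =>
    coeff_eq_zero_of_mem_sandwichSpan hord ht fun _ h => h.trans_lt hm]
  exact exists_mdvd_of_coeff_ne_zero hord ht hcoeff

end Termination

/-- **Termination theorem.** An LM-reduced monic subset `G` is a monic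
Gröbner basis of `⟨G⟩` iff every overlap element `o(g,u;v,g') = g·u − v·g'` (where
`LM(g)·u = v·LM(g')`, `|u| < |LM(g')|`, `|v| < |LM(g)|`) reduces to `0` by division
by `G`. -/
theorem termination_theorem [LinearOrder (Word n)] (hord : IsMonomialOrder n)
    (G : Set (FreeAlg R n)) (hmonic : ∀ g ∈ G, IsMonic g) (hred : LMReduced G) :
    IsMonicGB G (TwoSidedIdeal.span G) ↔
      ∀ g ∈ G, ∀ g' ∈ G, ∀ u v : Word n,
        LMon g * u = v * LMon g' →
        FreeMonoid.length u < FreeMonoid.length (LMon (g' : FreeAlg R n)) →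
        FreeMonoid.length v < FreeMonoid.length (LMon g) →
        (g * mono R u - mono R v * g' = 0 ∨
          ∃ (k : ℕ) (c : Fin k → R) (w s : Fin k → Word n) (h : Fin k → FreeAlg R n),
            (∀ i, h i ∈ G) ∧
            g * mono R u - mono R v * g' =
              ∑ i, c i • (mono R (w i) * h i * mono R (s i)) ∧
            ∀ i, c i ≠ 0 → LMon (mono R (w i) * h i * mono R (s i)) < LMon g * u) := by
  simp only [← mem_sandwichSpan_Iio_iff hord hmonic]
  refine ⟨fun hGB g hg g' hg' u v huv _ _ => ?_, fun hov => ⟨hmonic, fun f hf hf0 => ?_⟩⟩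
  · exact overlap_mem_sandwichSpan_Iio_of_isMonicGB hord hGB hg hg' huv
  · exact exists_mdvd_lMon_of_mem_span hord hmonic hred hov hf hf0
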